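/- arXiv:2201.01439 — 5 statements merged into one kernel-verified Lean document; each statement's English description precedes it below -/
import Mathlib

section
/- Let m ≥ 2 and let C be a self-dual Z_m-code of length 2n with generator matrix (I_n | A), where A is an n×n matrix over Z_m with rows r_1,...,r_n. Let x, y ∈ (Z_m)^n satisfy ⟨x,x⟩ = ⟨y,y⟩ = ⟨x,y⟩ = 0. Define A(x,y) as the n×n matrix whose i-th row is r'_i = r_i + ⟨r_i,y⟩x − ⟨r_i,x⟩y. Then the Z_m-code C(A,x,y) of length 2n with generator matrix (I_n | A(x,y)) is a self-dual Z_m-code. -/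
open Finset

/-- Inner product of two vectors over `ZMod m`. -/
def dotP {m : ℕ} {ι : Type} [Fintype ι] (x y : ι → ZMod m) : ZMod m :=
  ∑ i, x i * y i

/-- A `ZMod m`-code (submodule) is self-dual if it equals its dual code. -/
def IsSelfDual {m : ℕ} {ι : Type} [Fintype ι]
    (C : Submodule (ZMod m) (ι → ZMod m)) : Prop :=
  ∀ x, x ∈ C ↔ ∀ y ∈ C, dotP x y = 0

/-- The code of length `2n` with generator matrix `(I | M)`: the span of the
vectors `(e_i, M i)`. -/
def genCode (m : ℕ) {ι : Type} [Fintype ι] [DecidableEq ι] (M : ι → ι → ZMod m) :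
    Submodule (ZMod m) (ι ⊕ ι → ZMod m) :=
  Submodule.span (ZMod m)
    {v | ∃ i : ι, v = Sum.elim (fun j => if j = i then 1 else 0) (M i)}

/-- The map `ρ : ZMod m → ℤ` sending the representative `i ∈ {0,…,m−1}` to `i`
if `i ≤ m/2` and to `i − m` otherwise (for `m = 2k` this is the map of the paper). -/
def rho (m : ℕ) (a : ZMod m) : ℤ :=
  if a.val ≤ m / 2 then (a.val : ℤ) else (a.val : ℤ) - (m : ℤ)

/-- Euclidean weight of a vector over `ZMod m`. -/
def wtE {m : ℕ} {ι : Type} [Fintype ι] (v : ι → ZMod m) : ℤ :=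
  ∑ i, (rho m (v i)) ^ 2

/-- A Type II `ZMod (2k)`-code: self-dual and all Euclidean weights divisible by `4k`. -/
def IsTypeII (k : ℕ) {ι : Type} [Fintype ι]
    (C : Submodule (ZMod (2 * k)) (ι → ZMod (2 * k))) : Prop :=
  IsSelfDual C ∧ ∀ c ∈ C, (4 * (k : ℤ)) ∣ wtE c

/-- Equivalence of `ZMod m`-codes: a permutation of coordinates together with
sign changes. -/
def CodeEquiv {m n : ℕ} (C C' : Submodule (ZMod m) (Fin n → ZMod m)) : Prop :=
  ∃ (σ : Equiv.Perm (Fin n)) (ε : Fin n → ZMod m),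
    (∀ i, ε i = 1 ∨ ε i = -1) ∧
    (C' : Set (Fin n → ZMod m)) =
      (fun c : Fin n → ZMod m => fun i => ε i * c (σ i)) '' (C : Set (Fin n → ZMod m))

/-- The binary part of a `ZMod m`-code. -/
def binaryPart {m n : ℕ} (C : Submodule (ZMod m) (Fin n → ZMod m)) :
    Set (Fin n → ZMod 2) :=
  {b | ∃ c ∈ C, ∀ i, b i = ((rho m (c i) : ℤ) : ZMod 2)}

/-- Hamming weight of a binary vector. -/
def wtH {n : ℕ} (b : Fin n → ZMod 2) : ℕ :=
  (Finset.univ.filter fun i => b i ≠ 0).card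

/-- The `n × n` negacirculant matrix with first row `r`. -/
def negacirc {m n : ℕ} (r : Fin n → ZMod m) : Fin n → Fin n → ZMod m :=
  fun i j =>
    if h : (i : ℕ) ≤ (j : ℕ) then r ⟨(j : ℕ) - (i : ℕ), by have hj := j.isLt; omega⟩
    else -r ⟨n + (j : ℕ) - (i : ℕ), by have hi := i.isLt; have hj := j.isLt; omega⟩

/-- The block matrix `[[A, B], [−Bᵀ, Aᵀ]]`. -/
def fourBlock {m n : ℕ} (A B : Fin n → Fin n → ZMod m) :
    (Fin n ⊕ Fin n) → (Fin n ⊕ Fin n) → ZMod m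
  | Sum.inl i, Sum.inl j => A i j
  | Sum.inl i, Sum.inr j => B i j
  | Sum.inr i, Sum.inl j => -B j i
  | Sum.inr i, Sum.inr j => A j i

/-- The Construction A lattice `A_m(C) = (1/√m)(ρ(C) + m ℤ^n)` as a subset of `ℝ^n`. -/
noncomputable def constrA (m : ℕ) {n : ℕ} (C : Submodule (ZMod m) (Fin n → ZMod m)) :
    Set (Fin n → ℝ) :=
  {x | ∃ c ∈ C, ∃ z : Fin n → ℤ,
    x = fun i => (1 / Real.sqrt m) * ((rho m (c i) : ℝ) + (m : ℝ) * (z i : ℝ))}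

/-! For isotropic, mutually orthogonal `x, y`, the map `v ↦ v + ⟨v,y⟩x − ⟨v,x⟩y` is an isometry
of `Rⁿ` (an Eichler transformation) whose inverse is the same map with `x` replaced by `-x`.
Applying it to the right half of `R^{2n}` carries the code generated by `(I | A)` onto the
code generated by `(I | A(x,y))`, and an isometric automorphism maps self-dual codes to
self-dual codes. -/

open Matrix

theorem dotP_eq_dotProduct {m : ℕ} {ι : Type} [Fintype ι] (v w : ι → ZMod m) :
    dotP v w = v ⬝ᵥ w := rfl

section Eichler

variable {R ι : Type*} [CommRing R] [Fintype ι]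

def eichlerMap (x y : ι → R) : (ι → R) →ₗ[R] (ι → R) where
  toFun v := v + (v ⬝ᵥ y) • x - (v ⬝ᵥ x) • y
  map_add' v w := by
    simp only [add_dotProduct, add_smul]
    abel
  map_smul' c v := by
    simp only [smul_dotProduct, smul_eq_mul, mul_smul, RingHom.id_apply, smul_add, smul_sub]

variable {x y : ι → R}

theorem eichlerMap_apply (v : ι → R) :
    eichlerMap x y v = v + (v ⬝ᵥ y) • x - (v ⬝ᵥ x) • y := rfl

variable (hxx : x ⬝ᵥ x = 0) (hyy : y ⬝ᵥ y = 0) (hxy : x ⬝ᵥ y = 0)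
include hxx hyy hxy

theorem dotProduct_eichlerMap_eichlerMap (v w : ι → R) :
    eichlerMap x y v ⬝ᵥ eichlerMap x y w = v ⬝ᵥ w := by
  simp only [eichlerMap_apply, add_dotProduct, sub_dotProduct, dotProduct_add, dotProduct_sub,
    smul_dotProduct, dotProduct_smul, smul_eq_mul, hxx, hyy, hxy, dotProduct_comm y x,
    dotProduct_comm w x, dotProduct_comm w y]
  ring

theorem eichlerMap_neg_eichlerMap (v : ι → R) :
    eichlerMap (-x) y (eichlerMap x y v) = v := by
  have hvy : eichlerMap x y v ⬝ᵥ y = v ⬝ᵥ y := by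
    simp [eichlerMap_apply, hxy, hyy]
  have hvx : eichlerMap x y v ⬝ᵥ x = v ⬝ᵥ x := by
    simp [eichlerMap_apply, hxx, dotProduct_comm y x, hxy]
  rw [eichlerMap_apply (x := -x), hvy, dotProduct_neg, hvx, eichlerMap_apply]
  module

def eichlerEquiv : (ι → R) ≃ₗ[R] (ι → R) :=
  LinearEquiv.ofLinearMap (eichlerMap x y) (eichlerMap (-x) y)
    (LinearMap.ext fun v => by
      simpa using eichlerMap_neg_eichlerMap (x := -x) (by simpa) hyy (by simpa) v)
    (LinearMap.ext (eichlerMap_neg_eichlerMap hxx hyy hxy))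

end Eichler

section RightHalf

variable {R ι : Type*} [Semiring R]

def LinearEquiv.onRightHalf (e : (ι → R) ≃ₗ[R] (ι → R)) : (ι ⊕ ι → R) ≃ₗ[R] (ι ⊕ ι → R) :=
  (LinearEquiv.sumArrowLequivProdArrow ι ι R R).trans <|
    ((LinearEquiv.refl R (ι → R)).prodCongr e).trans
      (LinearEquiv.sumArrowLequivProdArrow ι ι R R).symm

theorem LinearEquiv.onRightHalf_apply (e : (ι → R) ≃ₗ[R] (ι → R)) (w : ι ⊕ ι → R) :
    e.onRightHalf w = Sum.elim (w ∘ Sum.inl) (e (w ∘ Sum.inr)) := by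
  ext (i | i) <;> rfl

theorem LinearEquiv.onRightHalf_sumElim (e : (ι → R) ≃ₗ[R] (ι → R)) (u v : ι → R) :
    e.onRightHalf (Sum.elim u v) = Sum.elim u (e v) := by
  rw [onRightHalf_apply, Sum.elim_comp_inl, Sum.elim_comp_inr]

theorem LinearEquiv.dotProduct_onRightHalf [Fintype ι] {e : (ι → R) ≃ₗ[R] (ι → R)}
    (he : ∀ v w, e v ⬝ᵥ e w = v ⬝ᵥ w) (v w : ι ⊕ ι → R) :
    e.onRightHalf v ⬝ᵥ e.onRightHalf w = v ⬝ᵥ w := by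
  rw [onRightHalf_apply, onRightHalf_apply, sumElim_dotProduct_sumElim, he,
    ← sumElim_dotProduct_sumElim, Sum.elim_comp_inl_inr, Sum.elim_comp_inl_inr]

end RightHalf

theorem IsSelfDual.map_of_isometry {m : ℕ} {ι : Type} [Fintype ι]
    {C : Submodule (ZMod m) (ι → ZMod m)} (hC : IsSelfDual C)
    (e : (ι → ZMod m) ≃ₗ[ZMod m] (ι → ZMod m)) (he : ∀ v w, dotP (e v) (e w) = dotP v w) :
    IsSelfDual (C.map (e : (ι → ZMod m) →ₗ[ZMod m] (ι → ZMod m))) := by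
  intro v
  rw [Submodule.mem_map_equiv, hC]
  refine ⟨fun h w hw => ?_, fun h u hu => ?_⟩
  · rw [Submodule.mem_map_equiv] at hw
    rw [← e.apply_symm_apply v, ← e.apply_symm_apply w, he]
    exact h _ hw
  · rw [← he, e.apply_symm_apply]
    exact h (e u) (Submodule.mem_map_of_mem hu)

theorem genCode_map_onRightHalf (m : ℕ) {ι : Type} [Fintype ι] [DecidableEq ι]
    (M : ι → ι → ZMod m) (e : (ι → ZMod m) ≃ₗ[ZMod m] (ι → ZMod m)) :
    genCode m (fun i => e (M i)) = (genCode m M).map (e.onRightHalf : _ →ₗ[ZMod m] _) := by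
  rw [genCode, genCode, Submodule.map_span]
  congr 1
  ext v
  simp [LinearEquiv.onRightHalf_sumElim, eq_comm]

theorem stmt0_general (m n : ℕ) (A : Fin n → Fin n → ZMod m)
    (hC : IsSelfDual (genCode m A))
    (x y : Fin n → ZMod m)
    (hxx : dotP x x = 0) (hyy : dotP y y = 0) (hxy : dotP x y = 0) :
    IsSelfDual (genCode m
      (fun i j => A i j + dotP (A i) y * x j - dotP (A i) x * y j)) := by
  rw [dotP_eq_dotProduct] at hxx hyy hxy
  set e := eichlerEquiv hxx hyy hxy
  show IsSelfDual (genCode m fun i => e (A i))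
  rw [genCode_map_onRightHalf]
  exact hC.map_of_isometry _
    (e.dotProduct_onRightHalf (dotProduct_eichlerMap_eichlerMap hxx hyy hxy))

/-- transforming the right half of a generator matrix of a
self-dual `ZMod m`-code by `r ↦ r + ⟨r,y⟩x − ⟨r,x⟩y` gives a self-dual code. -/
theorem stmt0 (m n : ℕ) (hm : 2 ≤ m) (A : Fin n → Fin n → ZMod m)
    (hC : IsSelfDual (genCode m A))
    (x y : Fin n → ZMod m)
    (hxx : dotP x x = 0) (hyy : dotP y y = 0) (hxy : dotP x y = 0) :
    IsSelfDual (genCode m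
      (fun i j => A i j + dotP (A i) y * x j - dotP (A i) x * y j)) :=
  stmt0_general m n A hC x y hxx hyy hxy
end

section
/- Let m ≥ 2, let A be an n×n' matrix over Z_m with rows r_1,...,r_n, and let x, y ∈ (Z_m)^{n'} satisfy ⟨x,x⟩ = ⟨y,y⟩ = ⟨x,y⟩ = 0. Let A(x,y) be the n×n' matrix whose i-th row is r_i + ⟨r_i,y⟩x − ⟨r_i,x⟩y. Then A(x,y)·A(x,y)^T = A·A^T; equivalently, ⟨r'_i, r'_j⟩ = ⟨r_i, r_j⟩ for all i, j, where r'_i denotes the i-th row of A(x,y). -/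
open Finset

section IsotropicShift

variable {R ι : Type*} [CommRing R] [Fintype ι]

/-- The `i`-th row of `A(x,y)` is `isotropicShift x y (A i)`. -/
def isotropicShift (x y r : ι → R) : ι → R :=
  r + (r ⬝ᵥ y) • x - (r ⬝ᵥ x) • y

/- Expanding bilinearly, every term involving `x` or `y` twice vanishes, and the cross terms
`⟨r,y⟩⟨x,s⟩ − ⟨r,x⟩⟨y,s⟩ + ⟨s,y⟩⟨r,x⟩ − ⟨s,x⟩⟨r,y⟩` cancel by symmetry. -/
theorem dotProduct_isotropicShift {x y : ι → R} (hxx : x ⬝ᵥ x = 0) (hyy : y ⬝ᵥ y = 0)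
    (hxy : x ⬝ᵥ y = 0) (r s : ι → R) :
    isotropicShift x y r ⬝ᵥ isotropicShift x y s = r ⬝ᵥ s := by
  have hyx : y ⬝ᵥ x = 0 := by rwa [dotProduct_comm]
  simp only [isotropicShift, add_dotProduct, sub_dotProduct, dotProduct_add, dotProduct_sub,
    smul_dotProduct, dotProduct_smul, smul_eq_mul, hxx, hyy, hxy, hyx]
  rw [dotProduct_comm x s, dotProduct_comm y s]
  ring

end IsotropicShift

theorem stmt1_general (m n n' : ℕ) (A : Fin n → Fin n' → ZMod m)
    (x y : Fin n' → ZMod m)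
    (hxx : dotP x x = 0) (hyy : dotP y y = 0) (hxy : dotP x y = 0) :
    ∀ i j : Fin n,
      dotP (fun t => A i t + dotP (A i) y * x t - dotP (A i) x * y t)
           (fun t => A j t + dotP (A j) y * x t - dotP (A j) x * y t)
        = dotP (A i) (A j) :=
  -- `dotP` is `⬝ᵥ` and the rows above are `isotropicShift x y (A i)`, both definitionally.
  fun i j => dotProduct_isotropicShift hxx hyy hxy (A i) (A j)

/-- the transformation `r ↦ r + ⟨r,y⟩x − ⟨r,x⟩y` preserves all
inner products of the rows of a matrix, i.e. `A(x,y)·A(x,y)ᵀ = A·Aᵀ`. -/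
theorem stmt1 (m n n' : ℕ) (hm : 2 ≤ m) (A : Fin n → Fin n' → ZMod m)
    (x y : Fin n' → ZMod m)
    (hxx : dotP x x = 0) (hyy : dotP y y = 0) (hxy : dotP x y = 0) :
    ∀ i j : Fin n,
      dotP (fun t => A i t + dotP (A i) y * x t - dotP (A i) x * y t)
           (fun t => A j t + dotP (A j) y * x t - dotP (A j) x * y t)
        = dotP (A i) (A j) :=
  stmt1_general m n n' A x y hxx hyy hxy
end

section
/- Let k ≥ 1 and let v, x, y ∈ (Z_{2k})^n satisfy wt_E(x) ≡ wt_E(y) ≡ 0 (mod 4k) and ⟨x,y⟩ = 0. Then wt_E(v + ⟨v,y⟩x − ⟨v,x⟩y) ≡ wt_E(v) (mod 4k). -/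
/-!
Lift `v, x, y` to the integer vectors `a, b, c` given by `ρ`. Integers congruent mod `2k` have
squares congruent mod `4k`, so `wt_E` of a vector is congruent mod `4k` to the squared norm of any
integer lift of it, and `a + ⟨a,c⟩ b - ⟨a,b⟩ c` lifts `v + ⟨v,y⟩ x - ⟨v,x⟩ y`. Its squared norm is
`|a|² + ⟨a,c⟩² |b|² + ⟨a,b⟩² |c|² - 2 ⟨a,b⟩ ⟨a,c⟩ ⟨b,c⟩` (the cross terms `± 2 ⟨a,b⟩ ⟨a,c⟩`
cancel), and the last three terms vanish mod `4k` because `4k ∣ |b|², |c|²` and `2k ∣ ⟨b,c⟩`.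
-/

open Finset

open Matrix

lemma rho_intCast {m : ℕ} [NeZero m] (a : ZMod m) : ((rho m a : ℤ) : ZMod m) = a := by
  unfold rho; split <;> simp [ZMod.natCast_val, ZMod.cast_id]

lemma sq_modEq_sq_of_modEq_two_mul {m p q : ℤ} (h : p ≡ q [ZMOD 2 * m]) :
    p ^ 2 ≡ q ^ 2 [ZMOD 4 * m] := by
  obtain ⟨t, ht⟩ := Int.modEq_iff_dvd.1 h
  exact Int.modEq_iff_dvd.2 ⟨t * p + m * t ^ 2, by rw [show q = p + 2 * m * t by linarith]; ring⟩

lemma wtE_modEq_dotProduct_self {k : ℕ} [NeZero k] {ι : Type} [Fintype ι]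
    (v : ι → ZMod (2 * k)) (a : ι → ℤ) (ha : ∀ i, (a i : ZMod (2 * k)) = v i) :
    wtE v ≡ a ⬝ᵥ a [ZMOD 4 * k] := by
  refine Int.ModEq.sum fun i _ => ?_
  rw [← sq]
  refine sq_modEq_sq_of_modEq_two_mul ?_
  exact_mod_cast (ZMod.intCast_eq_intCast_iff (rho (2 * k) (v i)) (a i) (2 * k)).1
    (by rw [rho_intCast, ha])

lemma intCast_dotProduct_rho {m : ℕ} [NeZero m] {ι : Type} [Fintype ι] (u w : ι → ZMod m) :
    (((fun i => rho m (u i)) ⬝ᵥ (fun i => rho m (w i)) : ℤ) : ZMod m) = dotP u w := by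
  simp only [dotP, dotProduct, Int.cast_sum, Int.cast_mul, rho_intCast]

lemma dotProduct_self_add_smul_sub_smul {R ι : Type*} [CommRing R] [Fintype ι] (a b c : ι → R) :
    (a + (a ⬝ᵥ c) • b - (a ⬝ᵥ b) • c) ⬝ᵥ (a + (a ⬝ᵥ c) • b - (a ⬝ᵥ b) • c) =
      a ⬝ᵥ a + (a ⬝ᵥ c) ^ 2 * (b ⬝ᵥ b) + (a ⬝ᵥ b) ^ 2 * (c ⬝ᵥ c)
        - 2 * (a ⬝ᵥ b) * (a ⬝ᵥ c) * (b ⬝ᵥ c) := by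
  simp only [add_dotProduct, sub_dotProduct, dotProduct_add, dotProduct_sub, smul_dotProduct,
    dotProduct_smul, smul_eq_mul, dotProduct_comm b a, dotProduct_comm c a, dotProduct_comm c b]
  ring

/-- the Euclidean weight of `v + ⟨v,y⟩x − ⟨v,x⟩y` is congruent to
that of `v` modulo `4k`, provided `wt_E(x) ≡ wt_E(y) ≡ 0 (mod 4k)` and `⟨x,y⟩ = 0`. -/
theorem stmt3 (k n : ℕ) (hk : 1 ≤ k) (v x y : Fin n → ZMod (2 * k))
    (hx : (4 * (k : ℤ)) ∣ wtE x) (hy : (4 * (k : ℤ)) ∣ wtE y)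
    (hxy : dotP x y = 0) :
    (4 * (k : ℤ)) ∣
      (wtE (fun i => v i + dotP v y * x i - dotP v x * y i) - wtE v) := by
  have : NeZero k := ⟨by omega⟩
  set a : Fin n → ℤ := fun i => rho (2 * k) (v i)
  set b : Fin n → ℤ := fun i => rho (2 * k) (x i)
  set c : Fin n → ℤ := fun i => rho (2 * k) (y i)
  have hbc : 2 * (k : ℤ) ∣ b ⬝ᵥ c := by
    exact_mod_cast (ZMod.intCast_zmod_eq_zero_iff_dvd _ (2 * k)).1
      ((intCast_dotProduct_rho x y).trans hxy)
  have hw := wtE_modEq_dotProduct_self (fun i => v i + dotP v y * x i - dotP v x * y i)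
    (a + (a ⬝ᵥ c) • b - (a ⬝ᵥ b) • c)
    (fun i => by simp [a, b, c, ← intCast_dotProduct_rho, rho_intCast])
  refine Int.ModEq.dvd ?_
  calc wtE v ≡ a ⬝ᵥ a [ZMOD 4 * k] := wtE_modEq_dotProduct_self v a fun i => rho_intCast _
    _ ≡ a ⬝ᵥ a + (a ⬝ᵥ c) ^ 2 * wtE x + (a ⬝ᵥ b) ^ 2 * wtE y
          - 2 * (a ⬝ᵥ b) * (a ⬝ᵥ c) * (b ⬝ᵥ c) [ZMOD 4 * k] := by
      obtain ⟨s, hs⟩ := hx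
      obtain ⟨r, hr⟩ := hy
      obtain ⟨t, ht⟩ := hbc
      refine Int.modEq_iff_dvd.2 ⟨(a ⬝ᵥ c) ^ 2 * s + (a ⬝ᵥ b) ^ 2 * r - (a ⬝ᵥ b) * (a ⬝ᵥ c) * t, ?_⟩
      rw [hs, hr, ht]
      ring
    _ ≡ a ⬝ᵥ a + (a ⬝ᵥ c) ^ 2 * (b ⬝ᵥ b) + (a ⬝ᵥ b) ^ 2 * (c ⬝ᵥ c)
          - 2 * (a ⬝ᵥ b) * (a ⬝ᵥ c) * (b ⬝ᵥ c) [ZMOD 4 * k] := by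
      gcongr
      · exact wtE_modEq_dotProduct_self x b fun i => rho_intCast _
      · exact wtE_modEq_dotProduct_self y c fun i => rho_intCast _
    _ = _ := (dotProduct_self_add_smul_sub_smul a b c).symm
    _ ≡ _ [ZMOD 4 * k] := hw.symm
end

section
/- Let k ≥ 1 and let C be a self-dual four-negacirculant Z_{2k}-code of length 4n with generator matrix (I_{2n} | [[A, B], [−B^T, A^T]]), where A and B are n×n negacirculant matrices over Z_{2k} with first rows r_A and r_B. If wt_E(r_A) + wt_E(r_B) ≡ −1 (mod 4k), then C is a Type II Z_{2k}-code. -/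
open Finset

/-!
Since `ρ(a) ≡ a (mod 2k)` and `x ≡ y (mod 2k)` implies `x² ≡ y² (mod 4k)`, the Euclidean weight
modulo `4k` may be computed from any integer lift of a vector. Hence
`wt_E(x + y) ≡ wt_E(x) + wt_E(y) + 2⟨x̃, ỹ⟩ ≡ wt_E(x) + wt_E(y)` for orthogonal `x, y`, and
`wt_E(r c) ≡ ρ(r)² wt_E(c)`, so in a self-orthogonal code it suffices to check the generators.
Each row of `[[A, B], [−Bᵀ, Aᵀ]]` is, up to signs and a permutation of each half, `(r_A, r_B)`,
so the generator `(e_i, m_i)` has weight `1 + wt_E(r_A) + wt_E(r_B) ≡ 0 (mod 4k)`.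
-/

-- `rho m` is `ZMod.valMinAbs` for `m ≠ 0`, and its absolute value for `m = 0`.
lemma rho_sq (m : ℕ) (a : ZMod m) : rho m a ^ 2 = a.valMinAbs ^ 2 := by
  rcases m with _ | m
  · simpa [rho, ZMod.val] using Int.natAbs_sq (a : ℤ)
  · rw [rho, ZMod.valMinAbs_def_pos]

lemma wtE_eq_sum_valMinAbs_sq {m : ℕ} {ι : Type} [Fintype ι] (v : ι → ZMod m) :
    wtE v = ∑ i, (v i).valMinAbs ^ 2 := by
  simp only [wtE, rho_sq]

lemma wtE_eq_of_eq_or_eq_neg {m : ℕ} {ι : Type} [Fintype ι] (σ : ι ≃ ι) {v r : ι → ZMod m}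
    (h : ∀ j, v j = r (σ j) ∨ v j = -r (σ j)) : wtE v = wtE r := by
  have hsq : ∀ j, (v j).valMinAbs ^ 2 = (r (σ j)).valMinAbs ^ 2 := fun j => by
    rcases h j with h | h <;> rw [h]
    rw [← Int.natAbs_sq, ZMod.natAbs_valMinAbs_neg, Int.natAbs_sq]
  simp only [wtE_eq_sum_valMinAbs_sq, hsq]
  exact σ.sum_comp fun j => (r j).valMinAbs ^ 2

lemma wtE_neg {m : ℕ} {ι : Type} [Fintype ι] (v : ι → ZMod m) : wtE (-v) = wtE v :=
  wtE_eq_of_eq_or_eq_neg (Equiv.refl ι) fun _ => Or.inr rfl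

lemma wtE_sum_elim {m : ℕ} {ι κ : Type} [Fintype ι] [Fintype κ] (u : ι → ZMod m)
    (v : κ → ZMod m) : wtE (Sum.elim u v) = wtE u + wtE v := by
  simp only [wtE, Fintype.sum_sum_type, Sum.elim_inl, Sum.elim_inr]

lemma Int.sq_modEq_sq_of_modEq {k x y : ℤ} (h : x ≡ y [ZMOD 2 * k]) :
    x ^ 2 ≡ y ^ 2 [ZMOD 4 * k] := by
  obtain ⟨s, hs⟩ := Int.modEq_iff_dvd.mp h
  rw [Int.modEq_iff_dvd]
  exact ⟨s * x + k * s ^ 2, by rw [show y = x + 2 * k * s by linarith]; ring⟩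

section EvenModulus

variable {k : ℕ} {ι : Type} [Fintype ι]

lemma valMinAbs_sq_modEq {a : ZMod (2 * k)} {x : ℤ} (h : (x : ZMod (2 * k)) = a) :
    a.valMinAbs ^ 2 ≡ x ^ 2 [ZMOD 4 * k] := by
  have h2k : a.valMinAbs ≡ x [ZMOD (2 * k : ℕ)] := by
    rw [← ZMod.intCast_eq_intCast_iff, ZMod.coe_valMinAbs, h]
  push_cast at h2k
  exact Int.sq_modEq_sq_of_modEq h2k

lemma wtE_modEq_sum_sq {v : ι → ZMod (2 * k)} (x : ι → ℤ)
    (h : ∀ i, (x i : ZMod (2 * k)) = v i) : wtE v ≡ ∑ i, x i ^ 2 [ZMOD 4 * k] := by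
  rw [wtE_eq_sum_valMinAbs_sq]
  exact Int.ModEq.sum fun i _ => valMinAbs_sq_modEq (h i)

lemma wtE_add_modEq {x y : ι → ZMod (2 * k)} (h : dotP x y = 0) :
    wtE (x + y) ≡ wtE x + wtE y [ZMOD 4 * k] := by
  set x' : ι → ℤ := fun i => (x i).valMinAbs
  set y' : ι → ℤ := fun i => (y i).valMinAbs
  have hcross : (2 * k : ℤ) ∣ ∑ i, x' i * y' i := by
    have : ((∑ i, x' i * y' i : ℤ) : ZMod (2 * k)) = 0 := by
      push_cast [x', y', ZMod.coe_valMinAbs]; exact h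
    exact_mod_cast (ZMod.intCast_zmod_eq_zero_iff_dvd _ _).mp this
  calc wtE (x + y) ≡ ∑ i, (x' i + y' i) ^ 2 [ZMOD 4 * k] :=
        wtE_modEq_sum_sq _ fun i => by simp [x', y']
    _ = wtE x + wtE y + 2 * ∑ i, x' i * y' i := by
        simp only [wtE_eq_sum_valMinAbs_sq, x', y', mul_sum, ← sum_add_distrib]
        exact sum_congr rfl fun i _ => by ring
    _ ≡ wtE x + wtE y + 0 [ZMOD 4 * k] := by
        refine Int.ModEq.add_left _ (Int.modEq_zero_iff_dvd.mpr ?_)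
        rw [show (4 * k : ℤ) = 2 * (2 * k) by ring]
        exact mul_dvd_mul_left 2 hcross
    _ = wtE x + wtE y := add_zero _

lemma wtE_smul_modEq (r : ZMod (2 * k)) (c : ι → ZMod (2 * k)) :
    wtE (r • c) ≡ r.valMinAbs ^ 2 * wtE c [ZMOD 4 * k] := by
  calc wtE (r • c) ≡ ∑ i, (r.valMinAbs * (c i).valMinAbs) ^ 2 [ZMOD 4 * k] :=
        wtE_modEq_sum_sq _ fun i => by simp
    _ = r.valMinAbs ^ 2 * wtE c := by
        simp only [wtE_eq_sum_valMinAbs_sq, mul_sum, mul_pow]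

lemma dvd_wtE_of_mem_span {s : Set (ι → ZMod (2 * k))}
    (horth : ∀ x ∈ Submodule.span (ZMod (2 * k)) s, ∀ y ∈ Submodule.span (ZMod (2 * k)) s,
      dotP x y = 0)
    (hs : ∀ v ∈ s, (4 * k : ℤ) ∣ wtE v) :
    ∀ c ∈ Submodule.span (ZMod (2 * k)) s, (4 * k : ℤ) ∣ wtE c := by
  intro c hc
  induction hc using Submodule.span_induction with
  | mem v hv => exact hs v hv
  | zero => simp [wtE_eq_sum_valMinAbs_sq]
  | add x y hx hy ihx ihy =>
    rw [← Int.modEq_zero_iff_dvd] at *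
    simpa using (wtE_add_modEq (horth x hx y hy)).trans (ihx.add ihy)
  | smul r c _ ih =>
    rw [← Int.modEq_zero_iff_dvd] at *
    simpa using (wtE_smul_modEq r c).trans (ih.mul_left _)

end EvenModulus

lemma negacirc_eq_or_eq_neg {m n : ℕ} (r : Fin n → ZMod m) (i j : Fin n) :
    negacirc r i j = r (j - i) ∨ negacirc r i j = -r (j - i) := by
  unfold negacirc
  split_ifs with h
  · exact Or.inl (congrArg r (Fin.ext (Fin.coe_sub_iff_le.mpr h).symm))
  · exact Or.inr (congrArg (-r ·) (Fin.ext (Fin.coe_sub_iff_lt.mpr (by omega)).symm))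

lemma wtE_negacirc_row {m n : ℕ} (r : Fin n → ZMod m) (i : Fin n) :
    wtE (negacirc r i) = wtE r := by
  have : NeZero n := ⟨i.pos.ne'⟩
  exact wtE_eq_of_eq_or_eq_neg (Equiv.subRight i) (negacirc_eq_or_eq_neg r i)

lemma wtE_negacirc_col {m n : ℕ} (r : Fin n → ZMod m) (i : Fin n) :
    wtE (fun j => negacirc r j i) = wtE r := by
  have : NeZero n := ⟨i.pos.ne'⟩
  exact wtE_eq_of_eq_or_eq_neg (Equiv.subLeft i) fun j => negacirc_eq_or_eq_neg r j i

lemma fourBlock_inl {m n : ℕ} (A B : Fin n → Fin n → ZMod m) (i : Fin n) :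
    fourBlock A B (Sum.inl i) = Sum.elim (A i) (B i) := by
  ext (j | j) <;> rfl

lemma fourBlock_inr {m n : ℕ} (A B : Fin n → Fin n → ZMod m) (i : Fin n) :
    fourBlock A B (Sum.inr i) = Sum.elim (-fun j => B j i) (fun j => A j i) := by
  ext (j | j) <;> rfl

lemma wtE_fourBlock_negacirc {m n : ℕ} (rA rB : Fin n → ZMod m) (i : Fin n ⊕ Fin n) :
    wtE (fourBlock (negacirc rA) (negacirc rB) i) = wtE rA + wtE rB := by
  rcases i with i | i
  · rw [fourBlock_inl, wtE_sum_elim, wtE_negacirc_row, wtE_negacirc_row]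
  · rw [fourBlock_inr, wtE_sum_elim, wtE_neg, wtE_negacirc_col, wtE_negacirc_col, add_comm]

theorem isTypeII_genCode {k : ℕ} {ι : Type} [Fintype ι] [DecidableEq ι]
    (M : ι → ι → ZMod (2 * k)) (hSD : IsSelfDual (genCode (2 * k) M))
    (hM : ∀ i, (4 * k : ℤ) ∣ wtE (M i) + 1) : IsTypeII k (genCode (2 * k) M) := by
  refine ⟨hSD, dvd_wtE_of_mem_span (fun x hx y hy => (hSD x).mp hx y hy) ?_⟩
  rintro _ ⟨i, rfl⟩
  have hunit : wtE (fun j => if j = i then (1 : ZMod (2 * k)) else 0) ≡ 1 [ZMOD 4 * k] := by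
    simpa using wtE_modEq_sum_sq (fun j => if j = i then 1 else 0)
      fun j => by split_ifs <;> simp
  rw [wtE_sum_elim, ← Int.modEq_zero_iff_dvd, add_comm]
  exact (hunit.add_left _).trans (Int.modEq_zero_iff_dvd.mpr (hM i))

theorem stmt8_general (k n : ℕ) (rA rB : Fin n → ZMod (2 * k))
    (hSD : IsSelfDual (genCode (2 * k) (fourBlock (negacirc rA) (negacirc rB))))
    (hwt : (4 * (k : ℤ)) ∣ (wtE rA + wtE rB + 1)) :
    IsTypeII k (genCode (2 * k) (fourBlock (negacirc rA) (negacirc rB))) :=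
  isTypeII_genCode _ hSD fun i => by rw [wtE_fourBlock_negacirc]; exact hwt

/-- a self-dual four-negacirculant `ZMod (2k)`-code with
`wt_E(r_A) + wt_E(r_B) ≡ −1 (mod 4k)` is Type II. -/
theorem stmt8 (k n : ℕ) (hk : 1 ≤ k) (rA rB : Fin n → ZMod (2 * k))
    (hSD : IsSelfDual (genCode (2 * k) (fourBlock (negacirc rA) (negacirc rB))))
    (hwt : (4 * (k : ℤ)) ∣ (wtE rA + wtE rB + 1)) :
    IsTypeII k (genCode (2 * k) (fourBlock (negacirc rA) (negacirc rB))) :=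
  stmt8_general k n rA rB hSD hwt
end

section
/- Let k ≥ 3 and n ∈ {24, 32, 40}, and let C be a Type II Z_{2k}-code of length n. Then the minimum Euclidean weight of C equals 8k (i.e., C is extremal) if and only if the Construction A lattice A_{2k}(C) has minimum norm 4. -/
open Finset

/-! The norm of `(1/√m)(ρ(c) + m z)` is `N/m` with `N = ∑ (ρ(c_i) + m z_i)²`. Since `|ρ(a)| ≤ m/2`,
shifting by `m z` never decreases `ρ(a)²`, so `N ≥ wtE c`; and for `c = 0`, `z ≠ 0` gives `N ≥ m²`.
Hence the minimum norm of `A_m(C)` is `min(m, d/m)` for `d` the minimum Euclidean weight of `C`,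
and as soon as `a < m`, `d = a m` is equivalent to the minimum norm being `a`. -/

section ConstructionA

variable {m n : ℕ}

lemma sum_sq_scaled_eq (c : Fin n → ZMod m) (z : Fin n → ℤ) :
    ∑ i, (1 / Real.sqrt m * ((rho m (c i) : ℝ) + m * z i)) ^ 2
      = ((∑ i, (rho m (c i) + m * z i) ^ 2 : ℤ) : ℝ) / m := by
  have hs : Real.sqrt m ^ 2 = m := Real.sq_sqrt (Nat.cast_nonneg m)
  push_cast
  rw [Finset.sum_div]
  refine Finset.sum_congr rfl fun i _ => ?_
  rw [mul_pow, div_pow, one_pow, hs]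
  ring

lemma sq_le_sum_sq_mul_of_ne_zero {z : Fin n → ℤ} (hz : z ≠ 0) :
    (m : ℤ) ^ 2 ≤ ∑ i, ((m : ℤ) * z i) ^ 2 := by
  obtain ⟨i, hi⟩ := Function.ne_iff.mp hz
  calc (m : ℤ) ^ 2 ≤ ((m : ℤ) * z i) ^ 2 := by
        rw [mul_pow]
        exact le_mul_of_one_le_right (sq_nonneg _) ((one_le_sq_iff_one_le_abs _).mpr
          (Int.one_le_abs hi))
    _ ≤ ∑ j, ((m : ℤ) * z j) ^ 2 :=
        Finset.single_le_sum (fun j _ => sq_nonneg ((m : ℤ) * z j)) (Finset.mem_univ i)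

variable [NeZero m]

lemma rho_eq_zero_iff {a : ZMod m} : rho m a = 0 ↔ a = 0 := by
  have := ZMod.val_lt a
  unfold rho
  split_ifs
  · rw [Nat.cast_eq_zero, ZMod.val_eq_zero]
  · exact iff_of_false (by omega) (by rintro rfl; simp at *)

lemma rho_sq_le_sq_add_mul (a : ZMod m) (z : ℤ) : rho m a ^ 2 ≤ (rho m a + m * z) ^ 2 := by
  have hρ : -(m : ℤ) ≤ 2 * rho m a ∧ 2 * rho m a ≤ m := by
    have := ZMod.val_lt a
    unfold rho
    split_ifs <;> omega
  -- `(ρ + m z)² - ρ² = m z (2ρ + m z)`, and `2ρ + m z` has the sign of `z` when `z ≠ 0`.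
  have hdiff : 0 ≤ (m : ℤ) * z * (2 * rho m a + m * z) := by
    rcases lt_trichotomy z 0 with hz | rfl | hz
    · exact mul_nonneg_of_nonpos_of_nonpos (by nlinarith) (by nlinarith)
    · simp
    · exact mul_nonneg (by positivity) (by nlinarith)
  nlinarith

lemma wtE_le_sum_sq_add_mul (c : Fin n → ZMod m) (z : Fin n → ℤ) :
    wtE c ≤ ∑ i, (rho m (c i) + m * z i) ^ 2 :=
  Finset.sum_le_sum fun i _ => rho_sq_le_sq_add_mul (c i) (z i)

lemma exists_mem_constrA_sum_sq_eq_wtE {C : Submodule (ZMod m) (Fin n → ZMod m)}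
    {c : Fin n → ZMod m} (hc : c ∈ C) (hc0 : c ≠ 0) :
    ∃ x ∈ constrA m C, x ≠ 0 ∧ ∑ i, x i ^ 2 = (wtE c : ℝ) / m := by
  refine ⟨_, ⟨c, hc, 0, rfl⟩, fun hx => hc0 ?_, ?_⟩
  · funext i
    have hi := congrFun hx i
    simp only [Pi.zero_apply, Int.cast_zero, mul_zero, add_zero, mul_eq_zero, one_div,
      inv_eq_zero, Real.sqrt_eq_zero', Int.cast_eq_zero, rho_eq_zero_iff] at hi
    exact hi.resolve_left (not_le.mpr (by exact_mod_cast NeZero.pos m))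
  · rw [sum_sq_scaled_eq]
    simp [wtE]

lemma le_sum_sq_of_mem_constrA {C : Submodule (ZMod m) (Fin n → ZMod m)}
    {x : Fin n → ℝ} (hx : x ∈ constrA m C) (hx0 : x ≠ 0) :
    (m : ℝ) ≤ ∑ i, x i ^ 2 ∨ ∃ c ∈ C, c ≠ 0 ∧ (wtE c : ℝ) ≤ m * ∑ i, x i ^ 2 := by
  obtain ⟨c, hc, z, rfl⟩ := hx
  have hm : (0 : ℝ) < m := by exact_mod_cast NeZero.pos m
  rw [sum_sq_scaled_eq, mul_div_cancel₀ _ hm.ne', le_div_iff₀ hm]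
  rcases eq_or_ne c 0 with rfl | hc0
  · left
    have hρ0 : rho m (0 : ZMod m) = 0 := rho_eq_zero_iff.mpr rfl
    have hz : z ≠ 0 := by
      rintro rfl
      exact hx0 (funext fun i => by simp [hρ0])
    have := sq_le_sum_sq_mul_of_ne_zero (m := m) hz
    simp only [Pi.zero_apply, hρ0, zero_add]
    exact_mod_cast (by linarith : (m : ℤ) * m ≤ ∑ i, ((m : ℤ) * z i) ^ 2)
  · exact Or.inr ⟨c, hc, hc0, by exact_mod_cast wtE_le_sum_sq_add_mul c z⟩

theorem isLeast_wtE_iff_isLeast_constrA_sum_sq (C : Submodule (ZMod m) (Fin n → ZMod m))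
    {a : ℤ} (ha : a < m) :
    IsLeast {w : ℤ | ∃ c ∈ C, c ≠ 0 ∧ wtE c = w} (a * m) ↔
      IsLeast {t : ℝ | ∃ x ∈ constrA m C, x ≠ 0 ∧ ∑ i, x i ^ 2 = t} a := by
  have hm : (0 : ℝ) < m := by exact_mod_cast NeZero.pos m
  have haR : (a : ℝ) < m := by exact_mod_cast ha
  constructor
  · rintro ⟨⟨c, hc, hc0, hw⟩, hmin⟩
    refine ⟨?_, ?_⟩
    · obtain ⟨x, hx, hx0, hxc⟩ := exists_mem_constrA_sum_sq_eq_wtE hc hc0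
      refine ⟨x, hx, hx0, ?_⟩
      rw [hxc, hw]
      push_cast
      field_simp
    · rintro t ⟨x, hx, hx0, rfl⟩
      rcases le_sum_sq_of_mem_constrA hx hx0 with hle | ⟨c', hc', hc'0, hle⟩
      · linarith
      · have : ((a * m : ℤ) : ℝ) ≤ wtE c' := by exact_mod_cast hmin ⟨c', hc', hc'0, rfl⟩
        push_cast at this
        nlinarith
  · rintro ⟨⟨x, hx, hx0, hxa⟩, hmin⟩
    have hlower : ∀ c ∈ C, c ≠ 0 → a * m ≤ wtE c := fun c hc hc0 => by
      obtain ⟨y, hy, hy0, hyc⟩ := exists_mem_constrA_sum_sq_eq_wtE hc hc0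
      have := hmin ⟨y, hy, hy0, hyc⟩
      rw [le_div_iff₀ hm] at this
      exact_mod_cast this
    refine ⟨?_, fun w ⟨c, hc, hc0, hw⟩ => hw ▸ hlower c hc hc0⟩
    rcases le_sum_sq_of_mem_constrA hx hx0 with hle | ⟨c, hc, hc0, hle⟩
    · linarith
    · refine ⟨c, hc, hc0, le_antisymm ?_ (hlower c hc hc0)⟩
      rw [hxa] at hle
      exact_mod_cast (by linarith : (wtE c : ℝ) ≤ a * m)

end ConstructionA

theorem stmt15_general (k n : ℕ) (hk : 3 ≤ k)
    (C : Submodule (ZMod (2 * k)) (Fin n → ZMod (2 * k))) :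
    IsLeast {w : ℤ | ∃ c ∈ C, c ≠ 0 ∧ wtE c = w} (8 * (k : ℤ)) ↔
      IsLeast {t : ℝ | ∃ x ∈ constrA (2 * k) C, x ≠ 0 ∧ ∑ i, (x i) ^ 2 = t} 4 := by
  have : NeZero (2 * k) := ⟨by omega⟩
  have h := isLeast_wtE_iff_isLeast_constrA_sum_sq C (a := 4) (by push_cast; omega)
  push_cast at h
  rwa [show (4 : ℤ) * (2 * k) = 8 * k by ring] at h

/-- for `k ≥ 3` and `n ∈ {24,32,40}`, a Type II `ZMod (2k)`-code of
length `n` is extremal (minimum Euclidean weight `8k`) iff its Construction A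
lattice has minimum norm 4. -/
theorem stmt15 (k n : ℕ) (hk : 3 ≤ k) (hn : n = 24 ∨ n = 32 ∨ n = 40)
    (C : Submodule (ZMod (2 * k)) (Fin n → ZMod (2 * k)))
    (hC : IsTypeII k C) :
    IsLeast {w : ℤ | ∃ c ∈ C, c ≠ 0 ∧ wtE c = w} (8 * (k : ℤ)) ↔
      IsLeast {t : ℝ | ∃ x ∈ constrA (2 * k) C, x ≠ 0 ∧ ∑ i, (x i) ^ 2 = t} 4 :=
  stmt15_general k n hk C
end
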